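/- arXiv:1003.5973 — 5 statements merged into one kernel-verified Lean document; each statement's English description precedes it below -/
import Mathlib

section
/- For nonnegative integers a, b, c with c ≥ 2 and |a - b| ≤ 1, the sum C(a+b+c, c) - 2·∑_{k=0}^{min(a,b)} C(a+b+c-2k-1, c-1) + ∑_{k=0}^{min(a,b)} C(a+b+c-2k-2, c-2) equals 0. -/
/-- Binomial coefficient with integer arguments, equal to `0` unless `0 ≤ k ≤ n`. -/
def ichoose (n k : ℤ) : ℤ := if 0 ≤ k ∧ k ≤ n then (n.toNat.choose k.toNat : ℤ) else 0

lemma ichoose_pascal (n k : ℤ) (hk : 1 ≤ k) :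
    ichoose n k = ichoose (n-1) k + ichoose (n-1) (k-1) := by
  unfold ichoose
  by_cases h : k ≤ n
  · rw [if_pos ⟨by linarith, h⟩]
    by_cases h2 : k ≤ n - 1
    · rw [if_pos ⟨by linarith, h2⟩, if_pos ⟨by linarith, by linarith⟩]
      have hN : n.toNat = ((n-1).toNat) + 1 := by omega
      have hK : k.toNat = ((k-1).toNat) + 1 := by omega
      rw [hN, hK, Nat.choose_succ_succ]
      push_cast
      ring
    · have hkn : k = n := by linarith
      subst hkn
      rw [if_neg (by intro ⟨_, h'⟩; linarith), if_pos ⟨by linarith, le_refl _⟩]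
      simp [Nat.choose_self]
  · rw [if_neg (by intro ⟨_, h'⟩; exact h h'),
        if_neg (by intro ⟨_, h'⟩; linarith),
        if_neg (by intro ⟨_, h'⟩; linarith)]
    ring

lemma ichoose_step (N : ℤ) (c : ℕ) (hc : 2 ≤ c) :
    ichoose N c - 2 * ichoose (N-1) ((c:ℤ)-1) + ichoose (N-2) ((c:ℤ)-2)
      = ichoose (N-2) c := by
  have h1 := ichoose_pascal N c (by exact_mod_cast Nat.one_le_iff_ne_zero.mpr (by omega))
  have h2 := ichoose_pascal (N-1) c (by exact_mod_cast Nat.one_le_iff_ne_zero.mpr (by omega))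
  have h3 := ichoose_pascal (N-1) ((c:ℤ)-1) (by push_cast; omega)
  rw [show N-1-1 = N-2 by ring] at h2 h3
  rw [show (c:ℤ)-1-1 = (c:ℤ)-2 by ring] at h3
  linarith

lemma ichoose_tele (n : ℤ) (c : ℕ) (hc : 2 ≤ c) (m : ℕ) :
    ichoose n c - 2 * ∑ k ∈ Finset.range (m+1), ichoose (n - 2*k - 1) ((c:ℤ)-1)
      + ∑ k ∈ Finset.range (m+1), ichoose (n - 2*k - 2) ((c:ℤ)-2)
      = ichoose (n - 2*(m+1)) c := by
  induction m with
  | zero =>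
      simp only [zero_add, Finset.sum_range_one, Nat.cast_zero, mul_zero, sub_zero]
      have := ichoose_step n c hc
      rw [show n - 2*(1:ℤ) = n - 2 by ring]
      linarith
  | succ m ih =>
      simp only [Finset.sum_range_succ] at ih ⊢
      have hs := ichoose_step (n - 2*((m:ℤ)+1)) c hc
      push_cast
      have e := congrArg (fun x => ichoose x (c:ℤ))
        (show n - 2*((m:ℤ)+1) - 2 = n - 2*((m:ℤ)+1+1) by ring)
      linarith [hs, ih, e]

theorem coefficient_c_ge_two (a b c : ℕ) (hc : 2 ≤ c) (hab : |(a : ℤ) - b| ≤ 1) :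
    ichoose ((a : ℤ) + b + c) c
      - 2 * ∑ k ∈ Finset.range (min a b + 1), ichoose ((a : ℤ) + b + c - 2 * k - 1) ((c : ℤ) - 1)
      + ∑ k ∈ Finset.range (min a b + 1), ichoose ((a : ℤ) + b + c - 2 * k - 2) ((c : ℤ) - 2)
      = 0 := by
  have ht := ichoose_tele ((a:ℤ) + b + c) c hc (min a b)
  rw [ht]
  have hab' : a = b ∨ a = b + 1 ∨ b = a + 1 := by
    rw [abs_le] at hab; omega
  have hx : (a:ℤ) + b + c - 2*(min a b + 1) = c - 2 ∨ (a:ℤ) + b + c - 2*(min a b + 1) = c - 1 := by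
    push_cast; omega
  unfold ichoose
  rcases hx with hx | hx <;> rw [hx, if_neg (by push_cast; omega)]
end

section
/- Let H¹ = Q + H·y where H = Q⟨x,y⟩ is the noncommutative polynomial algebra in x and y, with z_a = x^{a-1}·y for positive integers a. Define the harmonic product * on H¹ by Q-bilinearity, w * 1 = 1 * w = w, and z_a w * z_b w' = z_a(w * z_b w') + z_b(z_a w * w') + z_{a+b}(w * w'). Then * is commutative: w * w' = w' * w for all w, w' in H¹. -/
noncomputable section

/-- `H = ℚ⟨x,y⟩`, the free noncommutative polynomial algebra on two generators. -/
abbrev H : Type := FreeAlgebra ℚ (Fin 2)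

/-- The generator `x`. -/
def Hx : H := FreeAlgebra.ι ℚ 0

/-- The generator `y`. -/
def Hy : H := FreeAlgebra.ι ℚ 1

/-- `z_a = x^{a-1} y`. -/
def z (a : ℕ) : H := Hx ^ (a - 1) * Hy

/-- Membership in `H¹ = ℚ + H·y`. -/
def H1mem (w : H) : Prop := ∃ (q : ℚ) (v : H), w = algebraMap ℚ H q + v * Hy

/-- Interpretation of a list of exponents as a word `z_{a_1} ⋯ z_{a_n}`. -/
def wd : List ℕ → H := fun l => (l.map z).prod

lemma wd_nil : wd [] = 1 := rfl

lemma wd_cons (a : ℕ) (l : List ℕ) : wd (a :: l) = z a * wd l := by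
  simp [wd]

lemma z_one : z 1 = Hy := by simp [z]

lemma Hx_mul_z (a : ℕ) (ha : 1 ≤ a) : Hx * z a = z (a + 1) := by
  obtain ⟨b, rfl⟩ := Nat.exists_eq_add_of_le ha
  show Hx * (Hx ^ (1 + b - 1) * Hy) = Hx ^ (1 + b + 1 - 1) * Hy
  have h1 : 1 + b - 1 = b := by omega
  have h2 : 1 + b + 1 - 1 = b + 1 := by omega
  rw [h1, h2, ← mul_assoc, ← pow_succ']

lemma H1mem_one : H1mem 1 := ⟨1, 0, by simp⟩

lemma H1mem_z_mul (a : ℕ) {w : H} (hw : H1mem w) : H1mem (z a * w) := by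
  obtain ⟨q, v, rfl⟩ := hw
  refine ⟨0, q • Hx ^ (a - 1) + z a * v, ?_⟩
  simp [z, mul_add, add_mul, Algebra.smul_def, Algebra.commutes q, mul_assoc]

lemma H1mem_wd (l : List ℕ) : H1mem (wd l) := by
  induction l with
  | nil => exact H1mem_one
  | cons a t ih => rw [wd_cons]; exact H1mem_z_mul a ih

/-- The set of "words" `z_{a_1} ⋯ z_{a_n}`, all `a_i ≥ 1`. -/
def WordSet : Set H := {u | ∃ l : List ℕ, (∀ a ∈ l, 1 ≤ a) ∧ u = wd l}

/-- Nonempty words. -/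
def NWordSet : Set H := {u | ∃ (a : ℕ) (l : List ℕ),
    1 ≤ a ∧ (∀ b ∈ l, 1 ≤ b) ∧ u = wd (a :: l)}

lemma NWordSet_subset : NWordSet ⊆ WordSet := by
  rintro u ⟨a, l, ha, hl, rfl⟩
  refine ⟨a :: l, ?_, rfl⟩
  intro b hb
  rcases List.mem_cons.mp hb with rfl | hb
  · exact ha
  · exact hl b hb

lemma mul_mem_span_NWord (v : H) :
    ∀ u ∈ Submodule.span ℚ NWordSet, v * u ∈ Submodule.span ℚ NWordSet := by
  induction v using FreeAlgebra.induction with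
  | grade0 r =>
    intro u hu
    rw [← Algebra.smul_def]
    exact Submodule.smul_mem _ r hu
  | grade1 i =>
    intro u hu
    induction hu using Submodule.span_induction with
    | mem u hu =>
      obtain ⟨a, l, ha, hl, rfl⟩ := hu
      fin_cases i
      · -- x
        show FreeAlgebra.ι ℚ (0 : Fin 2) * wd (a :: l) ∈ Submodule.span ℚ NWordSet
        have : (FreeAlgebra.ι ℚ (0 : Fin 2)) * wd (a :: l) = wd ((a + 1) :: l) := by
          rw [wd_cons, wd_cons, ← mul_assoc]
          rw [show (FreeAlgebra.ι ℚ (0 : Fin 2)) = Hx from rfl, Hx_mul_z a ha]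
        rw [this]
        exact Submodule.subset_span ⟨a + 1, l, by omega, hl, rfl⟩
      · -- y
        show FreeAlgebra.ι ℚ (1 : Fin 2) * wd (a :: l) ∈ Submodule.span ℚ NWordSet
        have : (FreeAlgebra.ι ℚ (1 : Fin 2)) * wd (a :: l) = wd (1 :: a :: l) := by
          rw [wd_cons 1 (a :: l), z_one]; rfl
        rw [this]
        refine Submodule.subset_span ⟨1, a :: l, le_refl 1, ?_, rfl⟩
        intro b hb
        rcases List.mem_cons.mp hb with rfl | hb
        · exact ha
        · exact hl b hb
    | zero => simp
    | add x y hx hy px py => rw [mul_add]; exact Submodule.add_mem _ px py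
    | smul r x hx px => rw [mul_smul_comm]; exact Submodule.smul_mem _ r px
  | mul v₁ v₂ h₁ h₂ =>
    intro u hu
    rw [mul_assoc]
    exact h₁ _ (h₂ u hu)
  | add v₁ v₂ h₁ h₂ =>
    intro u hu
    rw [add_mul]
    exact Submodule.add_mem _ (h₁ u hu) (h₂ u hu)

lemma H1mem_mem_span {w : H} (hw : H1mem w) : w ∈ Submodule.span ℚ WordSet := by
  obtain ⟨q, v, rfl⟩ := hw
  apply Submodule.add_mem
  · have h1 : (1 : H) ∈ WordSet := ⟨[], by simp, rfl⟩
    rw [Algebra.algebraMap_eq_smul_one]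
    exact Submodule.smul_mem _ q (Submodule.subset_span h1)
  · have hy : Hy ∈ Submodule.span ℚ NWordSet :=
      Submodule.subset_span ⟨1, [], le_refl 1, by simp, by rw [wd_cons, z_one, wd_nil, mul_one]⟩
    exact Submodule.span_mono NWordSet_subset (mul_mem_span_NWord v Hy hy)

theorem harmonic_product_comm (m : H →ₗ[ℚ] H →ₗ[ℚ] H)
    (hL : ∀ w : H, H1mem w → m 1 w = w)
    (hR : ∀ w : H, H1mem w → m w 1 = w)
    (hrec : ∀ (a b : ℕ), 1 ≤ a → 1 ≤ b → ∀ w w' : H, H1mem w → H1mem w' →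
      m (z a * w) (z b * w') =
        z a * m w (z b * w') + z b * m (z a * w) w' + z (a + b) * m w w')
    (w w' : H) (hw : H1mem w) (hw' : H1mem w') :
    m w w' = m w' w := by
  -- Step 1: commutativity on words, by induction on total length.
  have key : ∀ n : ℕ, ∀ l l' : List ℕ, l.length + l'.length ≤ n →
      (∀ a ∈ l, 1 ≤ a) → (∀ a ∈ l', 1 ≤ a) → m (wd l) (wd l') = m (wd l') (wd l) := by
    intro n
    induction n with
    | zero =>
      intro l l' hlen _ _
      have : l = [] ∧ l' = [] := by
        constructor <;> (apply List.eq_nil_of_length_eq_zero; omega)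
      obtain ⟨rfl, rfl⟩ := this
      rfl
    | succ n ih =>
      intro l l' hlen hl hl'
      match l, l' with
      | [], l' =>
        rw [wd_nil, hL _ (H1mem_wd l'), hR _ (H1mem_wd l')]
      | a :: t, [] =>
        rw [wd_nil, hL _ (H1mem_wd (a :: t)), hR _ (H1mem_wd (a :: t))]
      | a :: t, b :: t' =>
        have ha : 1 ≤ a := hl a (by simp)
        have hb : 1 ≤ b := hl' b (by simp)
        have hta : ∀ c ∈ t, 1 ≤ c := fun c hc => hl c (by simp [hc])
        have htb : ∀ c ∈ t', 1 ≤ c := fun c hc => hl' c (by simp [hc])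
        simp only [wd_cons]
        rw [hrec a b ha hb _ _ (H1mem_wd t) (H1mem_wd t'),
          hrec b a hb ha _ _ (H1mem_wd t') (H1mem_wd t)]
        have e1 : m (wd t) (z b * wd t') = m (z b * wd t') (wd t) := by
          have := ih t (b :: t') (by simp at hlen ⊢; omega) hta
            (by intro c hc; rcases List.mem_cons.mp hc with rfl | hc
                · exact hb
                · exact htb c hc)
          simpa [wd_cons] using this
        have e2 : m (z a * wd t) (wd t') = m (wd t') (z a * wd t) := by
          have := ih (a :: t) t' (by simp at hlen ⊢; omega)
            (by intro c hc; rcases List.mem_cons.mp hc with rfl | hc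
                · exact ha
                · exact hta c hc) htb
          simpa [wd_cons] using this
        have e3 : m (wd t) (wd t') = m (wd t') (wd t) := by
          exact ih t t' (by simp at hlen ⊢; omega) hta htb
        rw [e1, e2, e3, Nat.add_comm b a]
        abel
  have hword : ∀ u ∈ WordSet, ∀ u' ∈ WordSet, m u u' = m u' u := by
    rintro u ⟨l, hl, rfl⟩ u' ⟨l', hl', rfl⟩
    exact key (l.length + l'.length) l l' le_rfl hl hl'
  -- Step 2: extend to the span by bilinearity.
  have main : ∀ u ∈ Submodule.span ℚ WordSet, ∀ u' ∈ Submodule.span ℚ WordSet,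
      m u u' = m u' u := by
    intro u hu u' hu'
    induction hu, hu' using Submodule.span_induction₂ with
    | mem_mem x y hx hy => exact hword x hx y hy
    | zero_left y hy => simp
    | zero_right x hx => simp
    | add_left x y zz hx hy hz h1 h2 => simp [map_add, h1, h2]
    | add_right x y zz hx hy hz h1 h2 => simp [map_add, h1, h2]
    | smul_left r x y hx hy h => simp [map_smul, h]
    | smul_right r x y hx hy h => simp [map_smul, h]
  exact main w (H1mem_mem_span hw) w' (H1mem_mem_span hw')

end
end

section
/- Let H¹ be as above and define the harmonic product * on H¹ by the recursion z_a w * z_b w' = z_a(w * z_b w') + z_b(z_a w * w') + z_{a+b}(w * w') with unit 1. Then * is associative: (w * w') * w'' = w * (w' * w'') for all w, w', w'' in H¹. -/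
noncomputable section

namespace HarmonicAux

def Hword : List ℕ → H
  | [] => 1
  | a :: l => z (a + 1) * Hword l

lemma H1mem_one : H1mem 1 := ⟨1, 0, by simp⟩

lemma H1mem_zmul {w : H} (k : ℕ) (h : H1mem w) : H1mem (z k * w) := by
  obtain ⟨q, v, rfl⟩ := h
  refine ⟨0, q • Hx ^ (k - 1) + z k * v, ?_⟩
  simp [z, mul_add, add_mul, smul_mul_assoc, Algebra.smul_def, Algebra.commutes, mul_assoc]

lemma H1mem_word (l : List ℕ) : H1mem (Hword l) := by
  induction l with
  | nil => exact H1mem_one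
  | cons a l ih => exact H1mem_zmul _ ih

def H1s : Submodule ℚ H where
  carrier := {w | H1mem w}
  zero_mem' := ⟨0, 0, by simp⟩
  add_mem' := by
    rintro a b ⟨q, v, rfl⟩ ⟨q', v', rfl⟩
    refine ⟨q + q', v + v', ?_⟩
    simp [map_add, add_mul]
    abel
  smul_mem' := by
    rintro c a ⟨q, v, rfl⟩
    refine ⟨c * q, c • v, ?_⟩
    simp only [smul_add, map_mul, Algebra.smul_def, smul_mul_assoc]
    rw [mul_add, mul_assoc]

def T : Submodule ℚ H := Submodule.span ℚ (Set.range Hword)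

lemma word_mem_T (l : List ℕ) : Hword l ∈ T := Submodule.subset_span ⟨l, rfl⟩

lemma T_le_H1 {w : H} (hw : w ∈ T) : H1mem w := by
  have : T ≤ H1s := Submodule.span_le.mpr (by rintro x ⟨l, rfl⟩; exact H1mem_word l)
  exact this hw

lemma zmul_T {k : ℕ} {t : H} (ht : t ∈ T) : z (k + 1) * t ∈ T := by
  induction ht using Submodule.span_induction with
  | mem x h => obtain ⟨l, rfl⟩ := h; exact Submodule.subset_span ⟨k :: l, rfl⟩
  | zero => simp
  | add x y hx hy px py => rw [mul_add]; exact T.add_mem px py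
  | smul c x hx px => rw [mul_smul_comm]; exact T.smul_mem c px

def U : Submodule ℚ H := Submodule.span ℚ (Set.range fun p : ℕ × List ℕ => Hword (p.1 :: p.2))

lemma U_le_T : U ≤ T :=
  Submodule.span_le.mpr (by rintro x ⟨⟨a, l⟩, rfl⟩; exact word_mem_T _)

lemma hx_U {u : H} (hu : u ∈ U) : Hx * u ∈ U := by
  induction hu using Submodule.span_induction with
  | mem x h =>
      obtain ⟨⟨a, l⟩, rfl⟩ := h
      have : Hx * Hword (a :: l) = Hword ((a + 1) :: l) := by
        show Hx * (z (a + 1) * Hword l) = z (a + 2) * Hword l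
        rw [z, z]
        simp [pow_succ', mul_assoc]
      rw [this]; exact Submodule.subset_span ⟨(a + 1, l), rfl⟩
  | zero => simp
  | add x y hx hy px py => rw [mul_add]; exact U.add_mem px py
  | smul c x hx px => rw [mul_smul_comm]; exact U.smul_mem c px

lemma hy_U {u : H} (hu : u ∈ U) : Hy * u ∈ U := by
  induction hu using Submodule.span_induction with
  | mem x h =>
      obtain ⟨⟨a, l⟩, rfl⟩ := h
      have : Hy * Hword (a :: l) = Hword (0 :: a :: l) := by
        show Hy * Hword (a :: l) = z 1 * Hword (a :: l)
        simp [z]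
      rw [this]; exact Submodule.subset_span ⟨(0, a :: l), rfl⟩
  | zero => simp
  | add x y hx hy px py => rw [mul_add]; exact U.add_mem px py
  | smul c x hx px => rw [mul_smul_comm]; exact U.smul_mem c px

lemma mul_U (v : H) : ∀ u ∈ U, v * u ∈ U := by
  induction v using FreeAlgebra.induction with
  | grade0 r => intro u hu; rw [← Algebra.smul_def]; exact U.smul_mem r hu
  | grade1 i =>
      intro u hu
      fin_cases i
      · exact hx_U hu
      · exact hy_U hu
  | mul a b ha hb => intro u hu; rw [mul_assoc]; exact ha _ (hb _ hu)
  | add a b ha hb => intro u hu; rw [add_mul]; exact U.add_mem (ha _ hu) (hb _ hu)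

lemma Hy_mem_U : Hy ∈ U := by
  have : Hy = Hword [0] := by simp [Hword, z]
  rw [this]; exact Submodule.subset_span ⟨(0, []), rfl⟩

lemma mem_T_of_H1mem {w : H} (hw : H1mem w) : w ∈ T := by
  obtain ⟨q, v, rfl⟩ := hw
  refine T.add_mem ?_ (U_le_T ?_)
  · have : algebraMap ℚ H q = q • (1 : H) := by simp [Algebra.smul_def]
    rw [this]
    exact T.smul_mem q (word_mem_T [])
  · exact mul_U v Hy Hy_mem_U

section Main
variable (m : H →ₗ[ℚ] H →ₗ[ℚ] H)
    (hL : ∀ w : H, H1mem w → m 1 w = w)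
    (hR : ∀ w : H, H1mem w → m w 1 = w)
    (hrec : ∀ (a b : ℕ), 1 ≤ a → 1 ≤ b → ∀ w w' : H, H1mem w → H1mem w' →
      m (z a * w) (z b * w') =
        z a * m w (z b * w') + z b * m (z a * w) w' + z (a + b) * m w w')

include hL hR hrec

lemma m_mem_T : ∀ (n : ℕ) (l1 l2 : List ℕ), l1.length + l2.length ≤ n →
    m (Hword l1) (Hword l2) ∈ T := by
  intro n
  induction n with
  | zero =>
    intro l1 l2 h
    have h1 : l1 = [] := List.length_eq_zero_iff.mp (by omega)
    have h2 : l2 = [] := List.length_eq_zero_iff.mp (by omega)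
    subst h1; subst h2
    rw [show Hword [] = 1 from rfl, hL 1 H1mem_one]
    exact word_mem_T []
  | succ n ih =>
    intro l1 l2 h
    match l1, l2 with
    | [], l2 =>
      rw [show Hword [] = 1 from rfl, hL _ (H1mem_word l2)]
      exact word_mem_T l2
    | a :: l1, [] =>
      rw [show Hword [] = 1 from rfl, hR _ (H1mem_word (a :: l1))]
      exact word_mem_T (a :: l1)
    | a :: l1, b :: l2 =>
      simp only [List.length_cons] at h
      have e := hrec (a+1) (b+1) (by omega) (by omega) (Hword l1) (Hword l2)
        (H1mem_word l1) (H1mem_word l2)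
      show m (z (a+1) * Hword l1) (z (b+1) * Hword l2) ∈ T
      rw [e]
      refine T.add_mem (T.add_mem ?_ ?_) ?_
      · exact zmul_T (ih l1 (b :: l2) (by simp only [List.length_cons]; omega))
      · exact zmul_T (ih (a :: l1) l2 (by simp only [List.length_cons]; omega))
      · rw [show a+1+(b+1) = (a+b+1)+1 from by omega]
        exact zmul_T (ih l1 l2 (by omega))

lemma H1mem_m (l1 l2 : List ℕ) : H1mem (m (Hword l1) (Hword l2)) :=
  T_le_H1 (m_mem_T m hL hR hrec (l1.length + l2.length) l1 l2 le_rfl)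

lemma assocW : ∀ (n : ℕ) (l1 l2 l3 : List ℕ), l1.length + l2.length + l3.length ≤ n →
    m (m (Hword l1) (Hword l2)) (Hword l3) = m (Hword l1) (m (Hword l2) (Hword l3)) := by
  intro n
  induction n with
  | zero =>
    intro l1 l2 l3 h
    have h1 : l1 = [] := List.length_eq_zero_iff.mp (by omega)
    have h2 : l2 = [] := List.length_eq_zero_iff.mp (by omega)
    have h3 : l3 = [] := List.length_eq_zero_iff.mp (by omega)
    subst h1; subst h2; subst h3
    rw [show Hword [] = 1 from rfl, hL 1 H1mem_one]
  | succ n ih =>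
    intro l1 l2 l3 h
    match l1, l2, l3 with
    | [], l2, l3 =>
      rw [show Hword [] = 1 from rfl, hL _ (H1mem_word l2),
        hL _ (H1mem_m m hL hR hrec l2 l3)]
    | a :: l1, [], l3 =>
      rw [show Hword [] = 1 from rfl, hR _ (H1mem_word (a :: l1)), hL _ (H1mem_word l3)]
    | a :: l1, b :: l2, [] =>
      rw [show Hword [] = 1 from rfl, hR _ (H1mem_m m hL hR hrec (a :: l1) (b :: l2)),
        hR _ (H1mem_word (b :: l2))]
    | a :: l1, b :: l2, c :: l3 =>
      simp only [List.length_cons] at h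
      have hu := H1mem_word l1
      have hv := H1mem_word l2
      have ht := H1mem_word l3
      have hP : H1mem (m (Hword l1) (z (b+1) * Hword l2)) := H1mem_m m hL hR hrec l1 (b :: l2)
      have hQ : H1mem (m (z (a+1) * Hword l1) (Hword l2)) := H1mem_m m hL hR hrec (a :: l1) l2
      have hR' : H1mem (m (Hword l1) (Hword l2)) := H1mem_m m hL hR hrec l1 l2
      have hP2 : H1mem (m (Hword l2) (z (c+1) * Hword l3)) := H1mem_m m hL hR hrec l2 (c :: l3)
      have hQ2 : H1mem (m (z (b+1) * Hword l2) (Hword l3)) := H1mem_m m hL hR hrec (b :: l2) l3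
      have hR2 : H1mem (m (Hword l2) (Hword l3)) := H1mem_m m hL hR hrec l2 l3
      have IH1 : m (m (Hword l1) (z (b+1) * Hword l2)) (z (c+1) * Hword l3) = m (Hword l1) (m (z (b+1) * Hword l2) (z (c+1) * Hword l3)) :=
        ih l1 (b :: l2) (c :: l3) (by simp only [List.length_cons]; omega)
      have IH2 : m (m (z (a+1) * Hword l1) (Hword l2)) (z (c+1) * Hword l3) = m (z (a+1) * Hword l1) (m (Hword l2) (z (c+1) * Hword l3)) :=
        ih (a :: l1) l2 (c :: l3) (by simp only [List.length_cons]; omega)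
      have IH3 : m (m (Hword l1) (Hword l2)) (z (c+1) * Hword l3) = m (Hword l1) (m (Hword l2) (z (c+1) * Hword l3)) :=
        ih l1 l2 (c :: l3) (by simp only [List.length_cons]; omega)
      have IH4 : m (m (z (a+1) * Hword l1) (z (b+1) * Hword l2)) (Hword l3) = m (z (a+1) * Hword l1) (m (z (b+1) * Hword l2) (Hword l3)) :=
        ih (a :: l1) (b :: l2) l3 (by simp only [List.length_cons]; omega)
      have IH5 : m (m (Hword l1) (z (b+1) * Hword l2)) (Hword l3) = m (Hword l1) (m (z (b+1) * Hword l2) (Hword l3)) :=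
        ih l1 (b :: l2) l3 (by simp only [List.length_cons]; omega)
      have IH6 : m (m (z (a+1) * Hword l1) (Hword l2)) (Hword l3) = m (z (a+1) * Hword l1) (m (Hword l2) (Hword l3)) :=
        ih (a :: l1) l2 l3 (by simp only [List.length_cons]; omega)
      have IH7 : m (m (Hword l1) (Hword l2)) (Hword l3) = m (Hword l1) (m (Hword l2) (Hword l3)) :=
        ih l1 l2 l3 (by omega)
      have e1 : m (z (a+1) * Hword l1) (z (b+1) * Hword l2) =
          z (a+1) * (m (Hword l1) (z (b+1) * Hword l2)) + z (b+1) * (m (z (a+1) * Hword l1) (Hword l2)) + z (a+1+(b+1)) * (m (Hword l1) (Hword l2)) :=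
        hrec (a+1) (b+1) (by omega) (by omega) (Hword l1) (Hword l2) hu hv
      have f1 : m (z (b+1) * Hword l2) (z (c+1) * Hword l3) =
          z (b+1) * (m (Hword l2) (z (c+1) * Hword l3)) + z (c+1) * (m (z (b+1) * Hword l2) (Hword l3)) + z (b+1+(c+1)) * (m (Hword l2) (Hword l3)) :=
        hrec (b+1) (c+1) (by omega) (by omega) (Hword l2) (Hword l3) hv ht
      have g1 := hrec (a+1) (c+1) (by omega) (by omega) (m (Hword l1) (z (b+1) * Hword l2)) (Hword l3) hP ht
      have g2 := hrec (b+1) (c+1) (by omega) (by omega) (m (z (a+1) * Hword l1) (Hword l2)) (Hword l3) hQ ht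
      have g3 := hrec (a+1+(b+1)) (c+1) (by omega) (by omega) (m (Hword l1) (Hword l2)) (Hword l3) hR' ht
      have k1 := hrec (a+1) (b+1) (by omega) (by omega) (Hword l1) (m (Hword l2) (z (c+1) * Hword l3)) hu hP2
      have k2 := hrec (a+1) (c+1) (by omega) (by omega) (Hword l1) (m (z (b+1) * Hword l2) (Hword l3)) hu hQ2
      have k3 := hrec (a+1) (b+1+(c+1)) (by omega) (by omega) (Hword l1) (m (Hword l2) (Hword l3)) hu hR2
      have e2 : m (z (a+1) * (m (Hword l1) (z (b+1) * Hword l2))) (Hword l3) + m (z (b+1) * (m (z (a+1) * Hword l1) (Hword l2))) (Hword l3) + m (z (a+1+(b+1)) * (m (Hword l1) (Hword l2))) (Hword l3)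
          = m (m (z (a+1) * Hword l1) (z (b+1) * Hword l2)) (Hword l3) := by
        rw [e1]; simp only [map_add, LinearMap.add_apply]
      have e2' : m (Hword l1) (z (b+1) * (m (Hword l2) (z (c+1) * Hword l3))) + m (Hword l1) (z (c+1) * (m (z (b+1) * Hword l2) (Hword l3))) + m (Hword l1) (z (b+1+(c+1)) * (m (Hword l2) (Hword l3)))
          = m (Hword l1) (m (z (b+1) * Hword l2) (z (c+1) * Hword l3)) := by
        rw [f1]; simp only [map_add]
      have L7 : m (m (z (a+1) * Hword l1) (z (b+1) * Hword l2)) (z (c+1) * Hword l3) = z (a+1) * m (Hword l1) (m (z (b+1) * Hword l2) (z (c+1) * Hword l3)) + z (b+1) * m (z (a+1) * Hword l1) (m (Hword l2) (z (c+1) * Hword l3)) + z (a+1+(b+1)) * m (Hword l1) (m (Hword l2) (z (c+1) * Hword l3)) + z (c+1) * m (z (a+1) * Hword l1) (m (z (b+1) * Hword l2) (Hword l3)) + z (a+1+(c+1)) * m (Hword l1) (m (z (b+1) * Hword l2) (Hword l3)) + z (b+1+(c+1)) * m (z (a+1) * Hword l1) (m (Hword l2) (Hword l3)) + z (a+1+(b+1)+(c+1))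 * m (Hword l1) (m (Hword l2) (Hword l3)) := by
        calc m (m (z (a+1) * Hword l1) (z (b+1) * Hword l2)) (z (c+1) * Hword l3)
            = m (z (a+1) * (m (Hword l1) (z (b+1) * Hword l2))) (z (c+1) * Hword l3) + m (z (b+1) * (m (z (a+1) * Hword l1) (Hword l2))) (z (c+1) * Hword l3) + m (z (a+1+(b+1)) * (m (Hword l1) (Hword l2))) (z (c+1) * Hword l3) := by
              rw [e1]; simp only [map_add, LinearMap.add_apply]
          _ = (z (a+1) * m (m (Hword l1) (z (b+1) * Hword l2)) (z (c+1) * Hword l3) + z (c+1) * m (z (a+1) * (m (Hword l1) (z (b+1) * Hword l2))) (Hword l3) + z (a+1+(c+1)) * m (m (Hword l1) (z (b+1) * Hword l2)) (Hword l3))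
              + (z (b+1) * m (m (z (a+1) * Hword l1) (Hword l2)) (z (c+1) * Hword l3) + z (c+1) * m (z (b+1) * (m (z (a+1) * Hword l1) (Hword l2))) (Hword l3) + z (b+1+(c+1)) * m (m (z (a+1) * Hword l1) (Hword l2)) (Hword l3))
              + (z (a+1+(b+1)) * m (m (Hword l1) (Hword l2)) (z (c+1) * Hword l3) + z (c+1) * m (z (a+1+(b+1)) * (m (Hword l1) (Hword l2))) (Hword l3) + z (a+1+(b+1)+(c+1)) * m (m (Hword l1) (Hword l2)) (Hword l3)) := by
              rw [g1, g2, g3]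
          _ = z (a+1) * m (m (Hword l1) (z (b+1) * Hword l2)) (z (c+1) * Hword l3) + z (b+1) * m (m (z (a+1) * Hword l1) (Hword l2)) (z (c+1) * Hword l3) + z (a+1+(b+1)) * m (m (Hword l1) (Hword l2)) (z (c+1) * Hword l3)
              + z (c+1) * (m (z (a+1) * (m (Hword l1) (z (b+1) * Hword l2))) (Hword l3) + m (z (b+1) * (m (z (a+1) * Hword l1) (Hword l2))) (Hword l3) + m (z (a+1+(b+1)) * (m (Hword l1) (Hword l2))) (Hword l3))
              + z (a+1+(c+1)) * m (m (Hword l1) (z (b+1) * Hword l2)) (Hword l3) + z (b+1+(c+1)) * m (m (z (a+1) * Hword l1) (Hword l2)) (Hword l3) + z (a+1+(b+1)+(c+1)) * m (m (Hword l1) (Hword l2)) (Hword l3) := by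
              rw [mul_add, mul_add]; abel
          _ = z (a+1) * m (Hword l1) (m (z (b+1) * Hword l2) (z (c+1) * Hword l3)) + z (b+1) * m (z (a+1) * Hword l1) (m (Hword l2) (z (c+1) * Hword l3)) + z (a+1+(b+1)) * m (Hword l1) (m (Hword l2) (z (c+1) * Hword l3)) + z (c+1) * m (z (a+1) * Hword l1) (m (z (b+1) * Hword l2) (Hword l3)) + z (a+1+(c+1)) * m (Hword l1) (m (z (b+1) * Hword l2) (Hword l3)) + z (b+1+(c+1)) * m (z (a+1) * Hword l1) (m (Hword l2) (Hword l3)) + z (a+1+(b+1)+(c+1)) * m (Hword l1) (m (Hword l2) (Hword l3)) := by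
              rw [e2, IH1, IH2, IH3, IH4, IH5, IH6, IH7]
      have R7 : m (z (a+1) * Hword l1) (m (z (b+1) * Hword l2) (z (c+1) * Hword l3)) = z (a+1) * m (Hword l1) (m (z (b+1) * Hword l2) (z (c+1) * Hword l3)) + z (b+1) * m (z (a+1) * Hword l1) (m (Hword l2) (z (c+1) * Hword l3)) + z (a+1+(b+1)) * m (Hword l1) (m (Hword l2) (z (c+1) * Hword l3)) + z (c+1) * m (z (a+1) * Hword l1) (m (z (b+1) * Hword l2) (Hword l3)) + z (a+1+(c+1)) * m (Hword l1) (m (z (b+1) * Hword l2) (Hword l3)) + z (b+1+(c+1)) * m (z (a+1) * Hword l1) (m (Hword l2) (Hword l3)) + z (a+1+(b+1)+(c+1)) * m (Hword l1) (m (Hword l2) (Hword l3)) := by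
        calc m (z (a+1) * Hword l1) (m (z (b+1) * Hword l2) (z (c+1) * Hword l3))
            = m (z (a+1) * Hword l1) (z (b+1) * (m (Hword l2) (z (c+1) * Hword l3))) + m (z (a+1) * Hword l1) (z (c+1) * (m (z (b+1) * Hword l2) (Hword l3))) + m (z (a+1) * Hword l1) (z (b+1+(c+1)) * (m (Hword l2) (Hword l3))) := by
              rw [f1]; simp only [map_add]
          _ = (z (a+1) * m (Hword l1) (z (b+1) * (m (Hword l2) (z (c+1) * Hword l3))) + z (b+1) * m (z (a+1) * Hword l1) (m (Hword l2) (z (c+1) * Hword l3)) + z (a+1+(b+1)) * m (Hword l1) (m (Hword l2) (z (c+1) * Hword l3)))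
              + (z (a+1) * m (Hword l1) (z (c+1) * (m (z (b+1) * Hword l2) (Hword l3))) + z (c+1) * m (z (a+1) * Hword l1) (m (z (b+1) * Hword l2) (Hword l3)) + z (a+1+(c+1)) * m (Hword l1) (m (z (b+1) * Hword l2) (Hword l3)))
              + (z (a+1) * m (Hword l1) (z (b+1+(c+1)) * (m (Hword l2) (Hword l3))) + z (b+1+(c+1)) * m (z (a+1) * Hword l1) (m (Hword l2) (Hword l3)) + z (a+1+(b+1+(c+1))) * m (Hword l1) (m (Hword l2) (Hword l3))) := by
              rw [k1, k2, k3]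
          _ = z (a+1) * (m (Hword l1) (z (b+1) * (m (Hword l2) (z (c+1) * Hword l3))) + m (Hword l1) (z (c+1) * (m (z (b+1) * Hword l2) (Hword l3))) + m (Hword l1) (z (b+1+(c+1)) * (m (Hword l2) (Hword l3))))
              + z (b+1) * m (z (a+1) * Hword l1) (m (Hword l2) (z (c+1) * Hword l3)) + z (a+1+(b+1)) * m (Hword l1) (m (Hword l2) (z (c+1) * Hword l3))
              + z (c+1) * m (z (a+1) * Hword l1) (m (z (b+1) * Hword l2) (Hword l3)) + z (a+1+(c+1)) * m (Hword l1) (m (z (b+1) * Hword l2) (Hword l3))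
              + z (b+1+(c+1)) * m (z (a+1) * Hword l1) (m (Hword l2) (Hword l3)) + z (a+1+(b+1+(c+1))) * m (Hword l1) (m (Hword l2) (Hword l3)) := by
              rw [mul_add, mul_add]; abel
          _ = z (a+1) * m (Hword l1) (m (z (b+1) * Hword l2) (z (c+1) * Hword l3)) + z (b+1) * m (z (a+1) * Hword l1) (m (Hword l2) (z (c+1) * Hword l3)) + z (a+1+(b+1)) * m (Hword l1) (m (Hword l2) (z (c+1) * Hword l3)) + z (c+1) * m (z (a+1) * Hword l1) (m (z (b+1) * Hword l2) (Hword l3)) + z (a+1+(c+1)) * m (Hword l1) (m (z (b+1) * Hword l2) (Hword l3)) + z (b+1+(c+1)) * m (z (a+1) * Hword l1) (m (Hword l2) (Hword l3)) + z (a+1+(b+1)+(c+1)) * m (Hword l1) (m (Hword l2) (Hword l3)) := by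
              rw [e2', show a+1+(b+1+(c+1)) = a+1+(b+1)+(c+1) from by omega]
      rw [show Hword (a :: l1) = (z (a+1) * Hword l1) from rfl, show Hword (b :: l2) = (z (b+1) * Hword l2) from rfl,
        show Hword (c :: l3) = (z (c+1) * Hword l3) from rfl, L7, R7]

end Main
end HarmonicAux

open HarmonicAux in
theorem harmonic_product_assoc (m : H →ₗ[ℚ] H →ₗ[ℚ] H)
    (hL : ∀ w : H, H1mem w → m 1 w = w)
    (hR : ∀ w : H, H1mem w → m w 1 = w)
    (hrec : ∀ (a b : ℕ), 1 ≤ a → 1 ≤ b → ∀ w w' : H, H1mem w → H1mem w' →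
      m (z a * w) (z b * w') =
        z a * m w (z b * w') + z b * m (z a * w) w' + z (a + b) * m w w')
    (w w' w'' : H) (hw : H1mem w) (hw' : H1mem w') (hw'' : H1mem w'') :
    m (m w w') w'' = m w (m w' w'') := by
  have key : ∀ x, x ∈ T → ∀ y, y ∈ T → ∀ u, u ∈ T →
      m (m x y) u = m x (m y u) := by
    intro x hx
    induction hx using Submodule.span_induction with
    | mem x hx =>
      obtain ⟨l1, rfl⟩ := hx
      intro y hy
      induction hy using Submodule.span_induction with
      | mem y hy =>
        obtain ⟨l2, rfl⟩ := hy
        intro u hu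
        induction hu using Submodule.span_induction with
        | mem u hu =>
          obtain ⟨l3, rfl⟩ := hu
          exact assocW m hL hR hrec _ l1 l2 l3 le_rfl
        | zero => simp
        | add p q hp hq ihp ihq => simp only [map_add, ihp, ihq]
        | smul c p hp ihp => simp only [map_smul, ihp]
      | zero => intro u hu; simp
      | add p q hp hq ihp ihq =>
        intro u hu
        simp only [map_add, LinearMap.add_apply]
        rw [ihp u hu, ihq u hu]
      | smul c p hp ihp =>
        intro u hu
        simp only [map_smul, LinearMap.smul_apply]
        rw [ihp u hu]
    | zero => intro y hy u hu; simp
    | add p q hp hq ihp ihq =>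
      intro y hy u hu
      simp only [map_add, LinearMap.add_apply]
      rw [ihp y hy u hu, ihq y hy u hu]
    | smul c p hp ihp =>
      intro y hy u hu
      simp only [map_smul, LinearMap.smul_apply]
      rw [ihp y hy u hu]
  exact key w (mem_T_of_H1mem hw) w' (mem_T_of_H1mem hw') w'' (mem_T_of_H1mem hw'')

end
end

section
/- For n = 3: z_{a_1} * z_{a_2} * z_{a_3} = z_{a_1} ш z_{a_2} ш z_{a_3} + z_{a_1+a_2} ш z_{a_3} + z_{a_1+a_3} ш z_{a_2} + z_{a_2+a_3} ш z_{a_1} + z_{a_1+a_2+a_3} in H¹. -/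
noncomputable section

theorem harmonic_three_letters (m sh : H →ₗ[ℚ] H →ₗ[ℚ] H)
    (hmL : ∀ w : H, H1mem w → m 1 w = w)
    (hmR : ∀ w : H, H1mem w → m w 1 = w)
    (hmrec : ∀ (a b : ℕ), 1 ≤ a → 1 ≤ b → ∀ w w' : H, H1mem w → H1mem w' →
      m (z a * w) (z b * w') =
        z a * m w (z b * w') + z b * m (z a * w) w' + z (a + b) * m w w')
    (hshL : ∀ w : H, H1mem w → sh 1 w = w)
    (hshR : ∀ w : H, H1mem w → sh w 1 = w)
    (hshrec : ∀ (a b : ℕ), 1 ≤ a → 1 ≤ b → ∀ w w' : H, H1mem w → H1mem w' →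
      sh (z a * w) (z b * w') = z a * sh w (z b * w') + z b * sh (z a * w) w')
    (a₁ a₂ a₃ : ℕ) (h₁ : 1 ≤ a₁) (h₂ : 1 ≤ a₂) (h₃ : 1 ≤ a₃) :
    m (z a₁) (m (z a₂) (z a₃)) =
      sh (z a₁) (sh (z a₂) (z a₃)) + sh (z (a₁ + a₂)) (z a₃)
        + sh (z (a₁ + a₃)) (z a₂) + sh (z (a₂ + a₃)) (z a₁) + z (a₁ + a₂ + a₃) := by
  have h1 : H1mem 1 := ⟨1, 0, by simp⟩
  have hz : ∀ a, H1mem (z a) := fun a => ⟨0, Hx ^ (a - 1), by simp [z]⟩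
  have hzz : ∀ a b, H1mem (z a * z b) :=
    fun a b => ⟨0, z a * Hx ^ (b - 1), by simp [z, mul_assoc]⟩
  -- pairwise harmonic product
  have pm : ∀ a b, 1 ≤ a → 1 ≤ b → m (z a) (z b) = z a * z b + z b * z a + z (a + b) := by
    intro a b ha hb
    have h := hmrec a b ha hb 1 1 h1 h1
    simpa [hmL _ h1, hmR _ (hz a), hmL _ (hz b)] using h
  -- pairwise shuffle product
  have psh : ∀ a b, 1 ≤ a → 1 ≤ b → sh (z a) (z b) = z a * z b + z b * z a := by
    intro a b ha hb
    have h := hshrec a b ha hb 1 1 h1 h1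
    simpa [hshR _ (hz a), hshL _ (hz b)] using h
  -- triple harmonic pieces
  have m13 : ∀ a b c, 1 ≤ a → 1 ≤ b → 1 ≤ c →
      m (z a) (z b * z c) = z a * (z b * z c) + z b * (z a * z c + z c * z a + z (a + c))
        + z (a + b) * z c := by
    intro a b c ha hb hc
    have h := hmrec a b ha hb 1 (z c) h1 (hz c)
    simpa [hmL _ (hzz b c), hmL _ (hz c), pm a c ha hc] using h
  have sh13 : ∀ a b c, 1 ≤ a → 1 ≤ b → 1 ≤ c →
      sh (z a) (z b * z c) = z a * (z b * z c) + z b * (z a * z c + z c * z a) := by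
    intro a b c ha hb hc
    have h := hshrec a b ha hb 1 (z c) h1 (hz c)
    simpa [hshL _ (hzz b c), psh a c ha hc] using h
  have h23 : (1:ℕ) ≤ a₂ + a₃ := le_trans h₂ (Nat.le_add_right _ _)
  have h12 : (1:ℕ) ≤ a₁ + a₂ := le_trans h₁ (Nat.le_add_right _ _)
  have h13 : (1:ℕ) ≤ a₁ + a₃ := le_trans h₁ (Nat.le_add_right _ _)
  rw [pm a₂ a₃ h₂ h₃, psh a₂ a₃ h₂ h₃]
  rw [map_add, map_add, map_add]
  rw [m13 a₁ a₂ a₃ h₁ h₂ h₃, m13 a₁ a₃ a₂ h₁ h₃ h₂, pm a₁ (a₂ + a₃) h₁ h23,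
    sh13 a₁ a₂ a₃ h₁ h₂ h₃, sh13 a₁ a₃ a₂ h₁ h₃ h₂,
    psh (a₁ + a₂) a₃ h12 h₃, psh (a₁ + a₃) a₂ h13 h₂, psh (a₂ + a₃) a₁ h23 h₁]
  have e1 : a₁ + (a₂ + a₃) = a₁ + a₂ + a₃ := by ring
  have e2 : a₂ + (a₁ + a₃) = a₁ + a₂ + a₃ := by ring
  have e3 : a₃ + (a₁ + a₂) = a₁ + a₂ + a₃ := by ring
  rw [e1]
  noncomm_ring

end
end

section
/- For α = (a,b,c) ∈ Z_{≥0}³ \ {0} with |a-b| ≤ 1, define C_α = ∑ ⟨β⟩·(-2)^{[γ·e₃ = 1]} over all decompositions α = β + γ with β ∈ M ∪ {0}, γ ∈ M₁ ∪ M₂ ∪ {0}, where M = Z_{≥0}³\{0}, M_j = {(k,k,j) : k ≥ 0}\{0}, ⟨(p,q,r)⟩ = C(p+q+r, r), and [·] is the Iverson bracket. Then C_α = 1 if c = 0; C_α = -1 if a = b and c = 1; and C_α = 0 otherwise. -/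
open Finset

private lemma pascal2 (n d : ℕ) :
    (n+d+2).choose (d+2) + (n+d).choose d
      = 2 * (n+d+1).choose (d+1) + (n+d).choose (d+2) := by
  have h1 : (n+d+2).choose (d+2) = (n+d+1).choose (d+1) + (n+d+1).choose (d+2) :=
    Nat.choose_succ_succ _ _
  have h2 : (n+d+1).choose (d+1) = (n+d).choose d + (n+d).choose (d+1) :=
    Nat.choose_succ_succ _ _
  have h3 : (n+d+1).choose (d+2) = (n+d).choose (d+1) + (n+d).choose (d+2) :=
    Nat.choose_succ_succ _ _
  omega

private lemma auxsum (ε d : ℕ) (hε : ε ≤ 1) (m : ℕ) :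
    (2*m+ε+d+2).choose (d+2) + ∑ j ∈ range (m+1), (2*j+ε+d).choose d
      = 2 * ∑ j ∈ range (m+1), (2*j+ε+d+1).choose (d+1) := by
  induction m with
  | zero =>
    simp only [range_one, sum_singleton, Nat.mul_zero, Nat.zero_add]
    interval_cases ε
    · simp
    · have h1 : (1+d+2).choose (d+2) = d+3 := by
        rw [show 1+d+2 = (d+2)+1 by omega, Nat.choose_succ_self_right]
      have h2 : (1+d).choose d = d+1 := by
        rw [show 1+d = d+1 by omega, Nat.choose_succ_self_right]
      have h3 : (1+d+1).choose (d+1) = d+2 := by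
        rw [show 1+d+1 = (d+1)+1 by omega, Nat.choose_succ_self_right]
      omega
  | succ m ih =>
    rw [sum_range_succ (fun j => (2*j+ε+d).choose d),
        sum_range_succ (fun j => (2*j+ε+d+1).choose (d+1))]
    have hp := pascal2 (2*m+ε+2) d
    have e1 : 2*(m+1)+ε+d+2 = 2*m+ε+2+d+2 := by ring
    have e2 : 2*(m+1)+ε+d = 2*m+ε+2+d := by ring
    have e3 : 2*(m+1)+ε+d+1 = 2*m+ε+2+d+1 := by ring
    rw [e2, show (2*m+ε+d+2) = 2*m+ε+2+d by ring] at *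
    omega

theorem lhs_coefficient_computation (a b c : ℕ) (hne : (a, b, c) ≠ (0, 0, 0))
    (hab : |(a : ℤ) - b| ≤ 1) :
    (((a + b + c).choose c : ℤ)
        + (if 1 ≤ c then
            (-2) * ∑ k ∈ Finset.range (min a b + 1),
              (((a - k) + (b - k) + (c - 1)).choose (c - 1) : ℤ)
          else 0)
        + (if 2 ≤ c then
            ∑ k ∈ Finset.range (min a b + 1),
              (((a - k) + (b - k) + (c - 2)).choose (c - 2) : ℤ)
          else 0)) =
      if c = 0 then 1 else if a = b ∧ c = 1 then -1 else 0 := by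
  rw [abs_le] at hab
  obtain ⟨hab1, hab2⟩ := hab
  set m := min a b with hm
  obtain ⟨ε, hε1, hεab⟩ : ∃ ε, ε ≤ 1 ∧ a + b = 2 * m + ε :=
    ⟨a + b - 2 * m, by omega, by omega⟩
  have hsum : ∀ e : ℕ, ∑ k ∈ range (m+1), (((a - k) + (b - k) + e).choose e : ℤ)
      = ∑ j ∈ range (m+1), ((2*j+ε+e).choose e : ℤ) := by
    intro e
    rw [← Finset.sum_range_reflect (fun j => ((2*j+ε+e).choose e : ℤ)) (m+1)]
    refine sum_congr rfl fun k hk => ?_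
    rw [mem_range] at hk
    norm_cast
    congr 1
    omega
  rcases Nat.lt_or_ge c 2 with hc | hc
  · interval_cases c
    · norm_num
    · norm_num [hsum 0, Nat.choose_one_right]
      split_ifs with h <;> omega
  · obtain ⟨d, rfl⟩ : ∃ d, c = d + 2 := ⟨c - 2, by omega⟩
    rw [if_pos (by omega : 1 ≤ d + 2), if_pos (le_refl 2 |>.trans (by omega)),
        if_neg (by omega : ¬ d + 2 = 0), if_neg (by simp)]
    simp only [show d + 2 - 1 = d + 1 from rfl, show d + 2 - 2 = d from rfl]
    rw [hsum (d+1), hsum d]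
    have H := auxsum ε d hε1 m
    simp only [show ∀ j, 2*j+ε+d+1 = 2*j+ε+(d+1) from fun j => by ring] at H
    rw [show a + b + (d+2) = 2*m+ε+d+2 by omega]
    linarith [H]
end
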